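/- arXiv:2410.02617 — 5 statements merged into one kernel-verified Lean document; each statement's English description precedes it below -/
import Mathlib

section
/- Let p be a prime, C the p×p cyclic permutation matrix, and D a unitary diagonal p×p matrix with det D = 1. For every integer k with 1 ≤ k ≤ p−1, the characteristic polynomial of D C^k is λ^p − 1; consequently the spectrum of D C^k is the set of all p-th roots of unity {1, θ, θ^2, …, θ^{p−1}}, where θ = e^{2πi/p}. -/
/-!
`cycleMatrix p ^ k` is the permutation matrix of `τ = finRotate p ^ k : i ↦ i + k`, and since `p`
is prime `τ` is a single `p`-cycle. In the Leibniz expansion of `det (X - D Cᵏ)` a permutation `σ`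
contributes only if every `σ i` is `i` or `τ⁻¹ i`; for a cycle through every point this forces
`σ = 1` or `σ = τ⁻¹`, which contribute `X ^ p` and `-∏ i, d i = -1`. The spectrum is then the set
of roots of `X ^ p - 1`.
-/

open Matrix Polynomial

/-- The `p × p` cyclic permutation matrix. -/
def cycleMatrix (p : ℕ) : Matrix (Fin p) (Fin p) ℂ :=
  Matrix.of fun i j => if (j : ℕ) = ((i : ℕ) + 1) % p then 1 else 0

namespace Equiv.Perm

variable {α : Type*} [Finite α]

theorem IsCycle.eq_one_or_eq_of_forall_apply_eq_or {π σ : Perm α} (hπ : π.IsCycle)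
    (hfix : ∀ x, π x ≠ x) (h : ∀ x, σ x = x ∨ σ x = π x) : σ = 1 ∨ σ = π := by
  by_contra! hne
  obtain ⟨x, hx⟩ : ∃ x, σ x ≠ x := by
    by_contra! hx
    exact hne.1 (Equiv.ext hx)
  obtain ⟨y, hy⟩ : ∃ y, σ y = y := by
    by_contra! hy
    exact hne.2 (Equiv.ext fun y => (h y).resolve_left (hy y))
  -- Once `σ` moves a point it agrees with `π` there, so it moves the next point of the cycle too.
  have hmoved : ∀ m : ℕ, σ ((π ^ m) x) ≠ (π ^ m) x := by
    intro m
    induction m with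
    | zero => exact hx
    | succ m ih =>
      rw [pow_succ', mul_apply, ← (h _).resolve_left ih]
      exact fun hσ => ih (σ.injective hσ)
  obtain ⟨m, rfl⟩ := hπ.exists_pow_eq (hfix x) (hfix y)
  exact hmoved m hy

end Equiv.Perm

namespace Matrix

variable {n R : Type*} [Fintype n] [DecidableEq n]

theorem permMatrix_pow [Semiring R] (σ : Equiv.Perm n) (k : ℕ) :
    (σ ^ k).permMatrix R = σ.permMatrix R ^ k := by
  induction k with
  | zero => simp
  | succ k ih => rw [pow_succ, permMatrix_mul, ih, pow_succ']

theorem diagonal_mul_permMatrix_apply [Semiring R] (d : n → R) (τ : Equiv.Perm n) (i j : n) :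
    (diagonal d * τ.permMatrix R) i j = if τ i = j then d i else 0 := by
  simp [diagonal_mul]

theorem charpoly_diagonal_mul_permMatrix_of_isCycle [CommRing R] (d : n → R)
    {τ : Equiv.Perm n} (hτ : τ.IsCycle) (hsupp : τ.support = Finset.univ) :
    (diagonal d * τ.permMatrix R).charpoly = X ^ Fintype.card n - C (∏ i, d i) := by
  set A := diagonal d * τ.permMatrix R
  have hA : ∀ i j, A i j = if τ i = j then d i else 0 := diagonal_mul_permMatrix_apply d τ
  have hfix : ∀ x, τ⁻¹ x ≠ x := fun x =>
    Equiv.Perm.mem_support.mp (by simp [hsupp])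
  have hvanish : ∀ σ ∈ Finset.univ, σ ∉ ({1, τ⁻¹} : Finset _) →
      Equiv.Perm.sign σ • ∏ i, charmatrix A (σ i) i = 0 := by
    intro σ _ hσ
    simp only [Finset.mem_insert, Finset.mem_singleton, not_or] at hσ
    obtain ⟨i, hi, hiτ⟩ : ∃ i, σ i ≠ i ∧ σ i ≠ τ⁻¹ i := by
      by_contra! h
      rcases hτ.inv.eq_one_or_eq_of_forall_apply_eq_or hfix
        (fun i => (em (σ i = i)).imp_right (h i)) with h1 | h1
      exacts [hσ.1 h1, hσ.2 h1]
    refine smul_eq_zero_of_right _ (Finset.prod_eq_zero (Finset.mem_univ i) ?_)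
    rw [charmatrix_apply_ne _ _ _ hi, hA, if_neg, map_zero, neg_zero]
    rwa [← Equiv.Perm.eq_inv_iff_eq]
  have hone : Equiv.Perm.sign (1 : Equiv.Perm n) • ∏ i, charmatrix A ((1 : Equiv.Perm n) i) i =
      X ^ Fintype.card n := by
    have hτfix : ∀ i, τ i ≠ i := fun i => Equiv.Perm.mem_support.mp (by simp [hsupp])
    simp [charmatrix_apply_eq, hA, hτfix]
  have hinv : Equiv.Perm.sign τ⁻¹ • ∏ i, charmatrix A (τ⁻¹ i) i = -C (∏ i, d i) := by
    have hentry : ∀ i, charmatrix A (τ⁻¹ i) i = -C (d (τ⁻¹ i)) := fun i => by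
      rw [charmatrix_apply_ne _ _ _ (hfix i), hA, if_pos (by simp)]
    rw [Finset.prod_congr rfl fun i _ => hentry i, Finset.prod_neg, ← map_prod,
      Equiv.prod_comp, Equiv.Perm.sign_inv, hτ.sign, hsupp, Finset.card_univ, Units.smul_def,
      zsmul_eq_mul]
    push_cast
    rw [neg_mul, ← mul_assoc, ← pow_add, Even.neg_one_pow ⟨_, rfl⟩, one_mul]
  rw [charpoly, det_apply, ← Finset.sum_subset (Finset.subset_univ _) hvanish,
    Finset.sum_pair (hτ.inv.ne_one.symm), hone, hinv, sub_eq_add_neg]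

end Matrix

theorem orderOf_finRotate_of_le {n : ℕ} (h : 2 ≤ n) : orderOf (finRotate n) = n := by
  rw [(isCycle_finRotate_of_le h).orderOf, support_finRotate_of_le h, Finset.card_univ,
    Fintype.card_fin]

theorem isCycle_finRotate_pow {n k : ℕ} (hn : 2 ≤ n) (hk : k.Coprime n) :
    (finRotate n ^ k).IsCycle := by
  rwa [(isCycle_finRotate_of_le hn).pow_iff, orderOf_finRotate_of_le hn]

theorem support_finRotate_pow {n k : ℕ} (hn : 2 ≤ n) (hk : ¬n ∣ k) :
    (finRotate n ^ k).support = Finset.univ := by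
  rw [(isCycle_finRotate_of_le hn).support_pow_eq_iff.mpr (by rwa [orderOf_finRotate_of_le hn]),
    support_finRotate_of_le hn]

theorem cycleMatrix_eq_permMatrix (p : ℕ) : cycleMatrix p = (finRotate p).permMatrix ℂ := by
  ext i j
  rcases p with _ | p
  · exact i.elim0
  · simp [cycleMatrix, Fin.ext_iff, Fin.val_add, eq_comm]

theorem spectrum_eq_range_exp_pow_of_charpoly_eq {n : Type*} [Fintype n] [DecidableEq n]
    {A : Matrix n n ℂ} {p : ℕ} [NeZero p] (hA : A.charpoly = X ^ p - 1) :
    spectrum ℂ A =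
      Set.range (fun j : Fin p => Complex.exp (2 * Real.pi * Complex.I / p) ^ (j : ℕ)) := by
  have hθ := Complex.isPrimitiveRoot_exp p (NeZero.ne p)
  ext z
  rw [mem_spectrum_iff_isRoot_charpoly, hA, IsRoot, eval_sub, eval_pow, eval_X, eval_one,
    sub_eq_zero]
  constructor
  · intro hz
    obtain ⟨i, hi, rfl⟩ := hθ.eq_pow_of_pow_eq_one hz
    exact ⟨⟨i, hi⟩, rfl⟩
  · rintro ⟨j, rfl⟩
    rw [← pow_mul, mul_comm (j : ℕ), pow_mul, hθ.pow_eq_one, one_pow]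

theorem charpoly_and_spectrum_diagonal_mul_cycle_pow_general (p : ℕ) (hp : p.Prime)
    (d : Fin p → ℂ) (hdet : ∏ i, d i = 1)
    (k : ℕ) (hk1 : 1 ≤ k) (hk2 : k ≤ p - 1) :
    (Matrix.diagonal d * cycleMatrix p ^ k).charpoly = X ^ p - 1 ∧
      spectrum ℂ (Matrix.diagonal d * cycleMatrix p ^ k) =
        Set.range (fun j : Fin p => Complex.exp (2 * Real.pi * Complex.I / p) ^ (j : ℕ)) := by
  have hndvd : ¬p ∣ k := Nat.not_dvd_of_pos_of_lt hk1 (by have := hp.two_le; omega)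
  have hcop : k.Coprime p := ((hp.coprime_iff_not_dvd).mpr hndvd).symm
  have hchar : (Matrix.diagonal d * cycleMatrix p ^ k).charpoly = X ^ p - 1 := by
    rw [cycleMatrix_eq_permMatrix, ← permMatrix_pow, charpoly_diagonal_mul_permMatrix_of_isCycle d
      (isCycle_finRotate_pow hp.two_le hcop) (support_finRotate_pow hp.two_le hndvd), hdet,
      map_one, Fintype.card_fin]
  have : NeZero p := ⟨hp.ne_zero⟩
  exact ⟨hchar, spectrum_eq_range_exp_pow_of_charpoly_eq hchar⟩

theorem charpoly_and_spectrum_diagonal_mul_cycle_pow (p : ℕ) (hp : p.Prime)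
    (d : Fin p → ℂ) (hd : ∀ i, ‖d i‖ = 1) (hdet : ∏ i, d i = 1)
    (k : ℕ) (hk1 : 1 ≤ k) (hk2 : k ≤ p - 1) :
    (Matrix.diagonal d * cycleMatrix p ^ k).charpoly = X ^ p - 1 ∧
      spectrum ℂ (Matrix.diagonal d * cycleMatrix p ^ k) =
        Set.range (fun j : Fin p => Complex.exp (2 * Real.pi * Complex.I / p) ^ (j : ℕ)) :=
  charpoly_and_spectrum_diagonal_mul_cycle_pow_general p hp d hdet k hk1 hk2
end

section
/- Fix an odd prime p and ξ = e^{2πi/p²}. The set 𝒯 of all 2p×2p 'tadpole matrices' A = diag(D C^k, 1, ξ^{k+a_1 p}, ξ^{2k+a_2 p}, …, ξ^{(p−1)k+a_{p−1}p}), where D ranges over unitary diagonal p×p matrices with det D = 1, k ∈ {0,…,p−1}, and a_j ∈ {0,…,p−1}, is closed under matrix multiplication; in fact it is a group under multiplication. -/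
open Matrix

/-- The fixed primitive `p²`-th root of unity `ξ = e^{2πi/p²}`. -/
noncomputable def xi (p : ℕ) : ℂ := Complex.exp (2 * Real.pi * Complex.I / (p ^ 2))

/-- The tadpole matrix with head `D C^k` (where `D = diagonal d`) and tail
`diag(ξ^{0·k + a_0 p}, ξ^{1·k + a_1 p}, …, ξ^{(p-1)k + a_{p-1} p})`.
We index the `2p × 2p` matrix by `Fin p ⊕ Fin p`. -/
noncomputable def tadpole (p : ℕ) (d : Fin p → ℂ) (k : ℕ) (a : Fin p → ℕ) :
    Matrix (Fin p ⊕ Fin p) (Fin p ⊕ Fin p) ℂ :=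
  Matrix.fromBlocks (Matrix.diagonal d * cycleMatrix p ^ k) 0 0
    (Matrix.diagonal fun j : Fin p => xi p ^ ((j : ℕ) * k + a j * p))

/-- Membership in the set `𝒯` of tadpole matrices: `D` is unitary diagonal of
determinant one, `k ∈ {0, …, p-1}`, `a_j ∈ {0, …, p-1}` and `a_0 = 0` (so the first
tail entry is `1`). -/
def IsTadpole (p : ℕ) (A : Matrix (Fin p ⊕ Fin p) (Fin p ⊕ Fin p) ℂ) : Prop :=
  ∃ (d : Fin p → ℂ) (k : ℕ) (a : Fin p → ℕ),
    (∀ i, ‖d i‖ = 1) ∧ (∏ i, d i = 1) ∧ k < p ∧ (∀ j, a j < p) ∧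
    (∀ j : Fin p, (j : ℕ) = 0 → a j = 0) ∧ A = tadpole p d k a

/-!
Conjugating by `C^k` shifts a diagonal matrix by `k`, and `ξ^{p²} = 1`, so the product of the
tadpole matrices with parameters `(d, k, a)` and `(e, l, b)` has head `diag(d_i e_{i+k}) C^{k+l}`
and tail exponents `j (k + l) + (a_j + b_j) p`. Writing `k + l = p q + k'` with `k' < p`, these
exponents are congruent modulo `p²` to `j k' + ((j q + a_j + b_j) mod p) p`, which is again of
tadpole shape. An inverse is obtained by taking `e_i = d_{i-k}⁻¹`, `l ≡ -k` and
`b_j ≡ -(j q + a_j)` modulo `p`.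
-/

open Fin.NatCast

theorem Fin.natCast_add_val_neg_mod {n : ℕ} [NeZero n] (x : ℕ) :
    (x + (-(x : Fin n)).val) % n = 0 := by
  rw [← Fin.val_natCast, Nat.cast_add, Fin.cast_val_eq_self, add_neg_cancel, Fin.val_zero]

theorem tail_exponent_modEq (p j k l a b : ℕ) :
    j * k + a * p + (j * l + b * p) ≡
      j * ((k + l) % p) + ((j * ((k + l) / p) + a + b) % p) * p [MOD p ^ 2] := by
  have hsplit : j * k + a * p + (j * l + b * p) =
      j * ((k + l) % p) + (j * ((k + l) / p) + a + b) * p := by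
    calc j * k + a * p + (j * l + b * p)
        = j * ((k + l) % p + p * ((k + l) / p)) + (a + b) * p := by rw [Nat.mod_add_div]; ring
      _ = _ := by ring
  rw [hsplit, sq]
  exact ((Nat.mod_modEq _ p).symm.mul_right' p).add_left _

theorem xi_pow_sq {p : ℕ} (hp : p ≠ 0) : xi p ^ p ^ 2 = 1 := by
  simpa [xi] using (Complex.isPrimitiveRoot_exp (p ^ 2) (pow_ne_zero 2 hp)).pow_eq_one

section CycleMatrix

variable {p : ℕ} [NeZero p]

theorem cycleMatrix_apply (i j : Fin p) :
    cycleMatrix p i j = if j = i + 1 then 1 else 0 := by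
  simp [cycleMatrix, Fin.ext_iff, Fin.val_add]

theorem cycleMatrix_pow_apply (k : ℕ) (i j : Fin p) :
    (cycleMatrix p ^ k) i j = if j = i + k then 1 else 0 := by
  induction k generalizing j with
  | zero => simp [Matrix.one_apply, eq_comm]
  | succ n ih =>
    simp only [pow_succ, mul_apply, ih, cycleMatrix_apply, ite_mul, one_mul, zero_mul,
      Finset.sum_ite_eq', Finset.mem_univ, if_true, Nat.cast_succ, add_assoc]

theorem cycleMatrix_pow_mod (k : ℕ) : cycleMatrix p ^ (k % p) = cycleMatrix p ^ k := by
  ext i j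
  simp only [cycleMatrix_pow_apply]
  congr 3
  exact Fin.ext (by simp [Fin.val_natCast])

theorem cycleMatrix_pow_mul_diagonal (k : ℕ) (e : Fin p → ℂ) :
    cycleMatrix p ^ k * diagonal e = diagonal (fun i => e (i + k)) * cycleMatrix p ^ k := by
  ext i j
  rw [mul_diagonal, diagonal_mul, cycleMatrix_pow_apply]
  split_ifs with h
  · rw [h, one_mul, mul_one]
  · rw [zero_mul, mul_zero]

end CycleMatrix

theorem tadpole_one {p : ℕ} : tadpole p 1 0 0 = 1 := by
  simp [tadpole, ← Pi.one_def, fromBlocks_one]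

section Tadpole

variable {p : ℕ} [NeZero p]

theorem tadpole_mul (d e : Fin p → ℂ) (k l : ℕ) (a b : Fin p → ℕ) :
    tadpole p d k a * tadpole p e l b =
      tadpole p (fun i => d i * e (i + k)) ((k + l) % p)
        (fun j => ((j : ℕ) * ((k + l) / p) + a j + b j) % p) := by
  simp only [tadpole, fromBlocks_multiply, Matrix.mul_zero, Matrix.zero_mul, add_zero, zero_add,
    diagonal_mul_diagonal, ← pow_add]
  congr 1
  · rw [mul_assoc, ← mul_assoc (cycleMatrix p ^ k), cycleMatrix_pow_mul_diagonal, mul_assoc,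
      ← pow_add, ← mul_assoc, diagonal_mul_diagonal, cycleMatrix_pow_mod]
  · congr 1
    ext j
    exact pow_eq_pow_of_modEq (tail_exponent_modEq ..) (xi_pow_sq (NeZero.ne p))

theorem isTadpole_one : IsTadpole p 1 :=
  ⟨1, 0, 0, by simp, by simp, Nat.pos_of_neZero p, fun _ => Nat.pos_of_neZero p,
    fun _ _ => rfl, tadpole_one.symm⟩

theorem IsTadpole.mul {A B : Matrix (Fin p ⊕ Fin p) (Fin p ⊕ Fin p) ℂ}
    (hA : IsTadpole p A) (hB : IsTadpole p B) : IsTadpole p (A * B) := by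
  obtain ⟨d, k, a, hd, hdet, -, -, ha0, rfl⟩ := hA
  obtain ⟨e, l, b, he, hedet, -, -, hb0, rfl⟩ := hB
  refine ⟨_, _, _, fun i => ?_, ?_, Nat.mod_lt _ (Nat.pos_of_neZero p),
    fun _ => Nat.mod_lt _ (Nat.pos_of_neZero p), fun j hj => ?_, tadpole_mul d e k l a b⟩
  · rw [norm_mul, hd, he, one_mul]
  · rw [Finset.prod_mul_distrib, hdet, one_mul]
    exact (Equiv.prod_comp (Equiv.addRight (k : Fin p)) e).trans hedet
  · simp [hj, ha0 j hj, hb0 j hj]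

theorem IsTadpole.exists_mul_eq_one {A : Matrix (Fin p ⊕ Fin p) (Fin p ⊕ Fin p) ℂ}
    (hA : IsTadpole p A) : ∃ B, IsTadpole p B ∧ A * B = 1 := by
  obtain ⟨d, k, a, hd, hdet, -, -, ha0, rfl⟩ := hA
  set l := (-(k : Fin p)).val
  set b : Fin p → ℕ := fun j => (-(((j : ℕ) * ((k + l) / p) + a j : ℕ) : Fin p)).val
  have hd0 (i : Fin p) : d i ≠ 0 := norm_ne_zero_iff.mp (by rw [hd]; exact one_ne_zero)
  refine ⟨tadpole p (fun i => (d (i - k))⁻¹) l b,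
    ⟨_, l, b, fun i => by rw [norm_inv, hd, inv_one], ?_, Fin.is_lt _, fun _ => Fin.is_lt _,
      fun j hj => ?_, rfl⟩, ?_⟩
  · simpa [Finset.prod_inv_distrib, hdet] using
      Equiv.prod_comp (Equiv.subRight (k : Fin p)) fun i => (d i)⁻¹
  · obtain rfl : j = 0 := Fin.ext hj
    simp [b, ha0 0 hj]
  · rw [tadpole_mul, ← tadpole_one]
    congr 1
    · ext i
      rw [add_sub_cancel_right, mul_inv_cancel₀ (hd0 i), Pi.one_apply]
    · exact Fin.natCast_add_val_neg_mod k
    · ext j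
      exact Fin.natCast_add_val_neg_mod _

end Tadpole

theorem tadpole_mul_closed_and_group_general (p : ℕ) (hp : p.Prime) :
    (IsTadpole p 1) ∧
      (∀ A B, IsTadpole p A → IsTadpole p B → IsTadpole p (A * B)) ∧
      (∀ A, IsTadpole p A → ∃ B, IsTadpole p B ∧ A * B = 1 ∧ B * A = 1) := by
  have : NeZero p := ⟨hp.ne_zero⟩
  refine ⟨isTadpole_one, fun _ _ => IsTadpole.mul, fun A hA => ?_⟩
  obtain ⟨B, hB, hAB⟩ := hA.exists_mul_eq_one
  exact ⟨B, hB, hAB, mul_eq_one_comm.mp hAB⟩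

/-- The set `𝒯` of tadpole matrices is closed under multiplication; in fact it is a
group under matrix multiplication (it contains the identity and is closed under
taking inverses). -/
theorem tadpole_mul_closed_and_group (p : ℕ) (hp : p.Prime) (hodd : Odd p) :
    (IsTadpole p 1) ∧
      (∀ A B, IsTadpole p A → IsTadpole p B → IsTadpole p (A * B)) ∧
      (∀ A, IsTadpole p A → ∃ B, IsTadpole p B ∧ A * B = 1 ∧ B * A = 1) :=
  tadpole_mul_closed_and_group_general p hp
end

section
/- Let A, B be tadpole matrices such that A is diagonal (k_A = 0) and B is not. Then σ(AB) ⊆ σ(A)·σ(B), i.e., every eigenvalue of AB is a product of an eigenvalue of A and an eigenvalue of B. -/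
/-!
The head of `AB` is the weighted cyclic shift `diag(d_A d_B) C^ℓ`. Since `ℓ` generates `ℤ/p` and
the weights multiply to `1`, the `p`-th power of such a shift is the identity, so its eigenvalues
are `p`-th roots of unity. Conversely every `p`-th root of unity `μ` is an eigenvalue of the head
`M` of `B`: the element `∑ μ⁻ˢ Mˢ` is killed by `M - μ`, and it is nonzero because `Mˢ` has zero
diagonal for `0 < s < p`. As `1` is a tail entry of `A`, such a `μ` is `1 · μ`. The tail of `AB`
is the entrywise product of the tails of `A` and `B`.
-/

open Matrix

open Finset Fin.NatCast

theorem prod_range_card_add_nsmul {G M : Type*} [AddCommGroup G] [Fintype G] [CommMonoid M]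
    (f : G → M) {g : G} (hg : addOrderOf g = Fintype.card G) (i : G) :
    ∏ t ∈ range (Fintype.card G), f (i + t • g) = ∏ x, f x := by
  have hinj : Function.Injective fun t : Fin (Fintype.card G) => i + (t : ℕ) • g :=
    fun s t hst => Fin.ext <| nsmul_injOn_Iio_addOrderOf (by simp [hg]) (by simp [hg])
      (add_left_cancel hst)
  rw [← Fin.prod_univ_eq_prod_range (fun t => f (i + t • g))]
  exact Fintype.prod_bijective _ ((Fintype.bijective_iff_injective_and_card _).2 ⟨hinj, by simp⟩)
    _ _ fun _ => rfl

theorem spectrum.mem_of_pow_eq_one_of_sum_ne_zero {K A : Type*} [Field K] [Ring A]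
    [Algebra K A] {a : A} {n : ℕ} (ha : a ^ n = 1) {μ : K} (hμ : μ ^ n = 1)
    (hsum : ∑ s ∈ range n, μ⁻¹ ^ s • a ^ s ≠ 0) : μ ∈ spectrum K a := by
  set P := ∑ s ∈ range n, μ⁻¹ ^ s • a ^ s
  have hn : n ≠ 0 := by rintro rfl; exact hsum rfl
  have hμ0 : μ ≠ 0 := by rintro rfl; simp [zero_pow hn] at hμ
  -- shifting the summation index only trades the `s = 0` term for the equal `s = n` term
  have hshift : μ⁻¹ • (a * P) = P := by
    have := sum_range_succ' (fun s => μ⁻¹ ^ s • a ^ s) n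
    rw [sum_range_succ, inv_pow, hμ, ha] at this
    simp only [P, mul_sum, smul_sum, mul_smul_comm, smul_smul, ← pow_succ']
    simpa using this.symm
  have haP : a * P = μ • P := by
    calc a * P = μ • μ⁻¹ • (a * P) := by rw [smul_smul, mul_inv_cancel₀ hμ0, one_smul]
      _ = μ • P := by rw [hshift]
  have hker : (algebraMap K A μ - a) * P = 0 := by
    rw [sub_mul, Algebra.algebraMap_eq_smul_one, smul_one_mul, haP, sub_self]
  exact fun hunit => hsum (hunit.mul_right_eq_zero.mp hker)

theorem Matrix.spectrum_fromBlocks_zero {m n K : Type*} [Fintype m] [Fintype n] [DecidableEq m]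
    [DecidableEq n] [Field K] (X : Matrix m m K) (Y : Matrix n n K) :
    spectrum K (fromBlocks X 0 0 Y) = spectrum K X ∪ spectrum K Y := by
  ext μ
  simp [mem_spectrum_iff_isRoot_charpoly]

namespace Matrix

variable {G R : Type*} [AddCommGroup G] [DecidableEq G]

def weightedShift [Zero R] (d : G → R) (g : G) : Matrix G G R :=
  of fun i j => if j = i + g then d i else 0

theorem weightedShift_zero [Zero R] (d : G → R) : weightedShift d 0 = diagonal d := by
  ext i j
  simp [weightedShift, diagonal_apply, eq_comm]

variable [Fintype G]

theorem weightedShift_mul [NonUnitalNonAssocSemiring R] (d e : G → R) (g h : G) :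
    weightedShift d g * weightedShift e h =
      weightedShift (fun i => d i * e (i + g)) (g + h) := by
  ext i j
  simp only [weightedShift, mul_apply, of_apply, ite_mul, zero_mul, mul_ite, mul_zero]
  rw [sum_eq_single (i + g) (fun k _ hk => by simp [hk]) (by simp)]
  simp [add_assoc]

theorem diagonal_mul_weightedShift [NonUnitalNonAssocSemiring R] (d e : G → R) (g : G) :
    diagonal d * weightedShift e g = weightedShift (d * e) g := by
  ext i j
  simp [weightedShift, diagonal_mul, mul_ite]

section CommSemiring

variable [CommSemiring R]

theorem weightedShift_pow (d : G → R) (g : G) (s : ℕ) :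
    weightedShift d g ^ s =
      weightedShift (fun i => ∏ t ∈ range s, d (i + t • g)) (s • g) := by
  induction s with
  | zero => simp [weightedShift_zero]
  | succ s ih =>
    rw [pow_succ, ih, weightedShift_mul, succ_nsmul]
    simp [prod_range_succ]

theorem weightedShift_pow_apply_self_of_lt_addOrderOf (d : G → R) {g : G} {s : ℕ}
    (hs0 : s ≠ 0) (hs : s < addOrderOf g) (i : G) : (weightedShift d g ^ s) i i = 0 := by
  rw [weightedShift_pow]
  simp [weightedShift, nsmul_ne_zero_of_lt_addOrderOf hs0 hs]

theorem weightedShift_pow_card (d : G → R) {g : G} (hg : addOrderOf g = Fintype.card G) :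
    weightedShift d g ^ Fintype.card G = diagonal fun _ => ∏ i, d i := by
  simp [weightedShift_pow, prod_range_card_add_nsmul d hg, weightedShift_zero]

end CommSemiring

theorem mem_spectrum_weightedShift_iff {K : Type*} [Field K] {d : G → K} (hd : ∏ i, d i = 1)
    {g : G} (hg : addOrderOf g = Fintype.card G) {μ : K} :
    μ ∈ spectrum K (weightedShift d g) ↔ μ ^ Fintype.card G = 1 := by
  have hpow : weightedShift d g ^ Fintype.card G = 1 := by
    rw [weightedShift_pow_card d hg, hd, diagonal_one]
  constructor
  · intro hμ
    simpa [hpow, spectrum.one_eq] using spectrum.pow_mem_pow _ (Fintype.card G) hμ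
  · intro hμ
    refine spectrum.mem_of_pow_eq_one_of_sum_ne_zero hpow hμ fun hsum => ?_
    have h00 := congr_fun₂ hsum 0 0
    rw [sum_apply, sum_eq_single 0] at h00
    · simp at h00
    · intro s hs hs0
      rw [smul_apply, weightedShift_pow_apply_self_of_lt_addOrderOf d hs0
        (hg ▸ mem_range.mp hs), smul_zero]
    · simp [Fintype.card_pos]

end Matrix

theorem addOrderOf_natCast_fin {p : ℕ} [NeZero p] (hp : p.Prime) {ℓ : ℕ} (hℓ : ¬ p ∣ ℓ) :
    addOrderOf (ℓ : Fin p) = p :=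
  have : Fact p.Prime := ⟨hp⟩
  addOrderOf_eq_prime (by simpa using card_nsmul_eq_zero (x := (ℓ : Fin p)))
    (by simpa using hℓ)

theorem cycleMatrix_eq_weightedShift (p : ℕ) [NeZero p] : cycleMatrix p = weightedShift 1 1 := by
  ext i j
  simp [cycleMatrix, weightedShift, Fin.ext_iff, Fin.val_add]

theorem diagonal_mul_cycleMatrix_pow {p : ℕ} [NeZero p] (d : Fin p → ℂ) (k : ℕ) :
    diagonal d * cycleMatrix p ^ k = weightedShift d (k : Fin p) := by
  rw [cycleMatrix_eq_weightedShift, weightedShift_pow, diagonal_mul_weightedShift]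
  simp [← Pi.one_def]

theorem tadpole_eq_fromBlocks {p : ℕ} [NeZero p] (d : Fin p → ℂ) (k : ℕ) (a : Fin p → ℕ) :
    tadpole p d k a = fromBlocks (weightedShift d (k : Fin p)) 0 0
      (diagonal fun j : Fin p => xi p ^ ((j : ℕ) * k + a j * p)) := by
  rw [tadpole, diagonal_mul_cycleMatrix_pow]

theorem spectrum_tadpole {p : ℕ} [NeZero p] (d : Fin p → ℂ) (k : ℕ) (a : Fin p → ℕ) :
    spectrum ℂ (tadpole p d k a) = spectrum ℂ (weightedShift d (k : Fin p)) ∪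
      Set.range fun j : Fin p => xi p ^ ((j : ℕ) * k + a j * p) := by
  rw [tadpole_eq_fromBlocks, spectrum_fromBlocks_zero, spectrum_diagonal]

theorem tadpole_zero_mul {p : ℕ} [NeZero p] (d e : Fin p → ℂ) (k : ℕ) (a b : Fin p → ℕ) :
    tadpole p d 0 a * tadpole p e k b =
      fromBlocks (weightedShift (d * e) (k : Fin p)) 0 0 (diagonal fun j : Fin p =>
        xi p ^ ((j : ℕ) * 0 + a j * p) * xi p ^ ((j : ℕ) * k + b j * p)) := by
  rw [tadpole_eq_fromBlocks, tadpole_eq_fromBlocks, fromBlocks_multiply, weightedShift_mul,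
    diagonal_mul_diagonal]
  simp [Pi.mul_def]

open Pointwise in
theorem tadpole_spectrum_mul_subset_of_diagonal_left_general (p : ℕ) (hp : p.Prime)
    (dA dB : Fin p → ℂ) (ℓ : ℕ) (a b : Fin p → ℕ)
    (hdetA : ∏ i, dA i = 1)
    (ha0 : ∀ j : Fin p, (j : ℕ) = 0 → a j = 0)
    (hdetB : ∏ i, dB i = 1)
    (hl : ℓ < p) (hl0 : ℓ ≠ 0) :
    spectrum ℂ (tadpole p dA 0 a * tadpole p dB ℓ b) ⊆
      spectrum ℂ (tadpole p dA 0 a) * spectrum ℂ (tadpole p dB ℓ b) := by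
  have : NeZero p := ⟨hp.ne_zero⟩
  have hℓ : addOrderOf (ℓ : Fin p) = Fintype.card (Fin p) := by
    rw [Fintype.card_fin, addOrderOf_natCast_fin hp (Nat.not_dvd_of_pos_of_lt (by omega) hl)]
  intro μ hμ
  rw [tadpole_zero_mul, spectrum_fromBlocks_zero, spectrum_diagonal] at hμ
  rcases hμ with hhead | ⟨j, rfl⟩
  · have hdetAB : ∏ i, (dA * dB) i = 1 := by simp [prod_mul_distrib, hdetA, hdetB]
    have hμp := (mem_spectrum_weightedShift_iff hdetAB hℓ).1 hhead
    refine ⟨1, ?_, μ, ?_, one_mul μ⟩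
    · rw [spectrum_tadpole]
      exact Or.inr ⟨0, by simp [ha0 0 (Fin.val_zero p)]⟩
    · rw [spectrum_tadpole]
      exact Or.inl ((mem_spectrum_weightedShift_iff hdetB hℓ).2 hμp)
  · rw [spectrum_tadpole, spectrum_tadpole]
    exact Set.mul_mem_mul (Or.inr ⟨j, rfl⟩) (Or.inr ⟨j, rfl⟩)

open Pointwise in
/-- If `A` is a diagonal tadpole matrix (head parameter `k = 0`) and `B` is a
non-diagonal tadpole matrix, then every eigenvalue of `AB` is the product of an
eigenvalue of `A` and an eigenvalue of `B`. -/
theorem tadpole_spectrum_mul_subset_of_diagonal_left (p : ℕ) (hp : p.Prime) (hodd : Odd p)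
    (dA dB : Fin p → ℂ) (ℓ : ℕ) (a b : Fin p → ℕ)
    (hdA : ∀ i, ‖dA i‖ = 1) (hdetA : ∏ i, dA i = 1)
    (ha : ∀ j, a j < p) (ha0 : ∀ j : Fin p, (j : ℕ) = 0 → a j = 0)
    (hdB : ∀ i, ‖dB i‖ = 1) (hdetB : ∏ i, dB i = 1)
    (hl : ℓ < p) (hl0 : ℓ ≠ 0)
    (hb : ∀ j, b j < p) (hb0 : ∀ j : Fin p, (j : ℕ) = 0 → b j = 0) :
    spectrum ℂ (tadpole p dA 0 a * tadpole p dB ℓ b) ⊆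
      spectrum ℂ (tadpole p dA 0 a) * spectrum ℂ (tadpole p dB ℓ b) :=
  tadpole_spectrum_mul_subset_of_diagonal_left_general p hp dA dB ℓ a b hdetA ha0 hdetB hl hl0
end

section
/- Let 0 < r < 1 and let A = λ[[1,a*],[b,ba*]] and B = μ[[1,x*],[y,yx*]] be elements of 𝒮_r with λ, μ ≠ 0. Then the unique nonzero eigenvalue of A is α = λ(1 + a*b), of B is β = μ(1 + x*y), and of AB is γ = λμ(1 + a*y)(1 + x*b), and |γ − αβ| ≤ (4r²/(1−r²)²)·|α|·|β|. -/
open Matrix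

/-- The `n × n` matrix `[[1, x*], [y, y x*]]` (with `n = m + 1`, indexed by
`Unit ⊕ Fin m`), where `x* ` denotes the conjugate-transpose row vector. -/
def srMat (m : ℕ) (x y : EuclideanSpace ℂ (Fin m)) :
    Matrix (Unit ⊕ Fin m) (Unit ⊕ Fin m) ℂ :=
  Matrix.fromBlocks 1 (Matrix.of fun _ j => (starRingEnd ℂ) (x j))
    (Matrix.of fun i _ => y i) (Matrix.of fun i j => y i * (starRingEnd ℂ) (x j))

/-- The semigroup `𝒮_r = { λ [[1, x*], [y, y x*]] : ‖x‖, ‖y‖ < r, λ ∈ ℂ }`. -/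
def srSet (m : ℕ) (r : ℝ) : Set (Matrix (Unit ⊕ Fin m) (Unit ⊕ Fin m) ℂ) :=
  {A | ∃ (x y : EuclideanSpace ℂ (Fin m)) (lam : ℂ),
    ‖x‖ < r ∧ ‖y‖ < r ∧ A = lam • srMat m x y}

/-!
Every matrix of `𝒮_r` is a rank-one matrix `u w*`, so it satisfies `M² = (w*u) M`; hence its only
possible nonzero eigenvalue is `w*u`, and it is one as soon as `M ≠ 0`. The product of two such
matrices is again a multiple of one of them:
`[[1,a*],[b,ba*]] [[1,x*],[y,yx*]] = (1 + a*y) [[1,x*],[b,bx*]]`.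

For the estimate, `(1 + a*y)(1 + x*b) - (1 + a*b)(1 + x*y) = ⟨a - x, y - b⟩ + ⟨a ∧ x, y ∧ b⟩ / 2`
with `u ∧ v = u ⊗ v - v ⊗ u`, and `‖a - x‖² + ‖a ∧ x‖² / 2 ≤ 4r²`; Cauchy–Schwarz and AM-GM bound
the difference by `4r²`, while `|1 + a*b|, |1 + x*y| ≥ 1 - r²`.
-/

section MulSelfEqSmul
variable {𝕜 A : Type*} [Field 𝕜] [Ring A] [Algebra 𝕜 A] {a : A} {τ : 𝕜}

open Polynomial in
theorem spectrum_subset_of_mul_self_eq_smul (h : a * a = τ • a) : spectrum 𝕜 a ⊆ {0, τ} := by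
  nontriviality A
  refine Set.image_subset_iff.mp (spectrum.subset_polynomial_aeval a (X ^ 2 - C τ * X))
    |>.trans fun z hz => ?_
  have hz : (z - τ) * z = 0 := by simpa [pow_two, h, Algebra.smul_def, sub_mul] using hz
  rcases mul_eq_zero.mp hz with hz | hz
  · exact .inr (sub_eq_zero.mp hz)
  · exact .inl hz

theorem mem_spectrum_of_mul_self_eq_smul (h : a * a = τ • a) (ha : a ≠ 0) :
    τ ∈ spectrum 𝕜 a := fun hu =>
  ha <| hu.mul_right_eq_zero.mp <| by
    rw [sub_mul, h, Algebra.algebraMap_eq_smul_one, smul_one_mul, sub_self]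

theorem spectrum_sep_ne_zero_eq_of_mul_self_eq_smul (h : a * a = τ • a) (ha : a ≠ 0) (hτ : τ ≠ 0) :
    {z ∈ spectrum 𝕜 a | z ≠ 0} = {τ} := by
  ext z
  constructor
  · rintro ⟨hz, hz0⟩
    simpa [hz0] using spectrum_subset_of_mul_self_eq_smul h hz
  · rintro rfl
    exact ⟨mem_spectrum_of_mul_self_eq_smul h ha, hτ⟩

end MulSelfEqSmul

open scoped TensorProduct InnerProductSpace

section InnerProduct
variable {𝕜 E : Type*} [RCLike 𝕜] [NormedAddCommGroup E] [InnerProductSpace 𝕜 E]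

theorem inner_wedge (f g h k : E) :
    ⟪f ⊗ₜ[𝕜] g - g ⊗ₜ[𝕜] f, h ⊗ₜ[𝕜] k - k ⊗ₜ[𝕜] h⟫_𝕜 =
      2 * (⟪f, h⟫_𝕜 * ⟪g, k⟫_𝕜 - ⟪f, k⟫_𝕜 * ⟪g, h⟫_𝕜) := by
  simp only [inner_sub_left, inner_sub_right, TensorProduct.inner_tmul]
  ring

theorem norm_wedge_sq (f g : E) :
    ‖f ⊗ₜ[𝕜] g - g ⊗ₜ[𝕜] f‖ ^ 2 = 2 * (‖f‖ ^ 2 * ‖g‖ ^ 2 - ‖⟪f, g⟫_𝕜‖ ^ 2) := by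
  rw [norm_sq_eq_re_inner (𝕜 := 𝕜), inner_wedge, inner_self_eq_norm_sq_to_K,
    inner_self_eq_norm_sq_to_K, ← inner_conj_symm f g, RCLike.conj_mul, RCLike.norm_conj]
  norm_cast

theorem norm_sub_sq_add_norm_wedge_sq_div_two_le {r : ℝ} (hr : r ≤ 1) {f g : E}
    (hf : ‖f‖ ≤ r) (hg : ‖g‖ ≤ r) :
    ‖f - g‖ ^ 2 + ‖f ⊗ₜ[𝕜] g - g ⊗ₜ[𝕜] f‖ ^ 2 / 2 ≤ (2 * r) ^ 2 := by
  rw [@norm_sub_sq 𝕜, norm_wedge_sq]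
  set s := ‖f‖ * ‖g‖
  set t := ‖⟪f, g⟫_𝕜‖
  have hre : -t ≤ RCLike.re ⟪f, g⟫_𝕜 := (abs_le.mp (RCLike.abs_re_le_norm _)).1
  have hts : t ≤ s := norm_inner_le_norm f g
  have hr0 : 0 ≤ r := (norm_nonneg f).trans hf
  have hsr : s ≤ r ^ 2 := by rw [sq]; exact mul_le_mul hf hg (norm_nonneg g) hr0
  have hs1 : s ≤ 1 := hsr.trans (by nlinarith)
  -- `2t - t²` is increasing on `[0, 1]`, so it is at most `2s - s²`
  have hmono : 2 * t - t ^ 2 ≤ 2 * s - s ^ 2 := by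
    nlinarith [mul_nonneg (sub_nonneg.2 hts) (by linarith [norm_nonneg ⟪f, g⟫_𝕜] : 0 ≤ 2 - s - t)]
  nlinarith [norm_nonneg f, norm_nonneg g]

theorem one_add_inner_mul_sub_eq (a b x y : E) :
    (1 + ⟪a, y⟫_𝕜) * (1 + ⟪x, b⟫_𝕜) - (1 + ⟪a, b⟫_𝕜) * (1 + ⟪x, y⟫_𝕜) =
      ⟪a - x, y - b⟫_𝕜 + ⟪a ⊗ₜ[𝕜] x - x ⊗ₜ[𝕜] a, y ⊗ₜ[𝕜] b - b ⊗ₜ[𝕜] y⟫_𝕜 / 2 := by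
  rw [inner_wedge, inner_sub_left, inner_sub_right, inner_sub_right]
  ring

theorem norm_one_add_inner_mul_sub_le {r : ℝ} (hr : r ≤ 1) {a b x y : E}
    (ha : ‖a‖ ≤ r) (hb : ‖b‖ ≤ r) (hx : ‖x‖ ≤ r) (hy : ‖y‖ ≤ r) :
    ‖(1 + ⟪a, y⟫_𝕜) * (1 + ⟪x, b⟫_𝕜) - (1 + ⟪a, b⟫_𝕜) * (1 + ⟪x, y⟫_𝕜)‖ ≤ 4 * r ^ 2 := by
  have hax := norm_sub_sq_add_norm_wedge_sq_div_two_le (𝕜 := 𝕜) hr ha hx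
  have hyb := norm_sub_sq_add_norm_wedge_sq_div_two_le (𝕜 := 𝕜) hr hy hb
  rw [one_add_inner_mul_sub_eq]
  calc _ ≤ ‖a - x‖ * ‖y - b‖ + ‖a ⊗ₜ[𝕜] x - x ⊗ₜ[𝕜] a‖ * ‖y ⊗ₜ[𝕜] b - b ⊗ₜ[𝕜] y‖ / 2 := by
        refine (norm_add_le _ _).trans (add_le_add (norm_inner_le_norm _ _) ?_)
        rw [norm_div, RCLike.norm_two]
        gcongr
        exact norm_inner_le_norm _ _
    _ ≤ 4 * r ^ 2 := by
        nlinarith [sq_nonneg (‖a - x‖ - ‖y - b‖),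
          sq_nonneg (‖a ⊗ₜ[𝕜] x - x ⊗ₜ[𝕜] a‖ - ‖y ⊗ₜ[𝕜] b - b ⊗ₜ[𝕜] y‖)]

theorem one_sub_sq_le_norm_one_add_inner {r : ℝ} {u v : E} (hu : ‖u‖ ≤ r) (hv : ‖v‖ ≤ r) :
    1 - r ^ 2 ≤ ‖1 + ⟪u, v⟫_𝕜‖ := by
  have huv : ‖⟪u, v⟫_𝕜‖ ≤ r ^ 2 := by
    rw [sq]
    exact (norm_inner_le_norm u v).trans
      (mul_le_mul hu hv (norm_nonneg v) ((norm_nonneg u).trans hu))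
  have := norm_sub_norm_le (1 : 𝕜) (-⟪u, v⟫_𝕜)
  rw [norm_one, norm_neg, sub_neg_eq_add] at this
  linarith

theorem one_add_inner_ne_zero {r : ℝ} (hr : r < 1) {u v : E} (hu : ‖u‖ ≤ r) (hv : ‖v‖ ≤ r) :
    1 + ⟪u, v⟫_𝕜 ≠ 0 := by
  have hr0 : 0 ≤ r := (norm_nonneg u).trans hu
  refine norm_pos_iff.mp (lt_of_lt_of_le ?_ (one_sub_sq_le_norm_one_add_inner hu hv))
  nlinarith

theorem norm_mul_one_add_inner_sub_le {r : ℝ} (hr : r < 1) {a b x y : E}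
    (ha : ‖a‖ ≤ r) (hb : ‖b‖ ≤ r) (hx : ‖x‖ ≤ r) (hy : ‖y‖ ≤ r) (lam mu : 𝕜) :
    ‖lam * mu * (1 + ⟪a, y⟫_𝕜) * (1 + ⟪x, b⟫_𝕜) - lam * (1 + ⟪a, b⟫_𝕜) * (mu * (1 + ⟪x, y⟫_𝕜))‖ ≤
      4 * r ^ 2 / (1 - r ^ 2) ^ 2 * (‖lam * (1 + ⟪a, b⟫_𝕜)‖ * ‖mu * (1 + ⟪x, y⟫_𝕜)‖) := by
  have hr0 : 0 ≤ r := (norm_nonneg a).trans ha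
  have hgap : 0 < 1 - r ^ 2 := by nlinarith
  calc _ = ‖lam‖ * ‖mu‖ *
          ‖(1 + ⟪a, y⟫_𝕜) * (1 + ⟪x, b⟫_𝕜) - (1 + ⟪a, b⟫_𝕜) * (1 + ⟪x, y⟫_𝕜)‖ := by
        rw [← norm_mul, ← norm_mul]
        congr 1
        ring
    _ ≤ ‖lam‖ * ‖mu‖ * (4 * r ^ 2) := by
        gcongr
        exact norm_one_add_inner_mul_sub_le hr.le ha hb hx hy
    _ = 4 * r ^ 2 / (1 - r ^ 2) ^ 2 * (‖lam‖ * (1 - r ^ 2) * (‖mu‖ * (1 - r ^ 2))) := by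
        field_simp
    _ ≤ 4 * r ^ 2 / (1 - r ^ 2) ^ 2 * (‖lam‖ * ‖1 + ⟪a, b⟫_𝕜‖ * (‖mu‖ * ‖1 + ⟪x, y⟫_𝕜‖)) := by
        gcongr
        · exact one_sub_sq_le_norm_one_add_inner ha hb
        · exact one_sub_sq_le_norm_one_add_inner hx hy
    _ = _ := by rw [norm_mul, norm_mul]

end InnerProduct

theorem sum_starRingEnd_mul_eq_inner {𝕜 ι : Type*} [RCLike 𝕜] [Fintype ι]
    (x y : EuclideanSpace 𝕜 ι) :
    ∑ i, starRingEnd 𝕜 (x i) * y i = ⟪x, y⟫_𝕜 := by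
  rw [EuclideanSpace.inner_eq_star_dotProduct, dotProduct_comm]
  rfl

section srMat
variable {m : ℕ}

theorem srMat_eq_vecMulVec (x y : EuclideanSpace ℂ (Fin m)) :
    srMat m x y = vecMulVec (Sum.elim 1 y) (Sum.elim 1 (star x.ofLp)) := by
  ext (_ | i) (_ | j) <;> simp [srMat, vecMulVec]

theorem sumElim_star_dotProduct_sumElim (x y : EuclideanSpace ℂ (Fin m)) :
    Sum.elim (1 : Unit → ℂ) (star x.ofLp) ⬝ᵥ Sum.elim 1 y = 1 + ⟪x, y⟫_ℂ := by
  rw [sumElim_dotProduct_sumElim, EuclideanSpace.inner_eq_star_dotProduct, dotProduct_comm y.ofLp]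
  simp

theorem srMat_mul_srMat (a b x y : EuclideanSpace ℂ (Fin m)) :
    srMat m a b * srMat m x y = (1 + ⟪a, y⟫_ℂ) • srMat m x b := by
  simp only [srMat_eq_vecMulVec, vecMulVec_mul_vecMulVec, sumElim_star_dotProduct_sumElim,
    vecMulVec_smul]

theorem srMat_ne_zero (x y : EuclideanSpace ℂ (Fin m)) : srMat m x y ≠ 0 := fun h => by
  simpa [srMat] using congrFun₂ h (.inl ()) (.inl ())

theorem spectrum_smul_srMat_sep_ne_zero {lam : ℂ} (hlam : lam ≠ 0)
    {x y : EuclideanSpace ℂ (Fin m)} (hxy : 1 + ⟪x, y⟫_ℂ ≠ 0) :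
    {z ∈ spectrum ℂ (lam • srMat m x y) | z ≠ 0} = {lam * (1 + ⟪x, y⟫_ℂ)} := by
  refine spectrum_sep_ne_zero_eq_of_mul_self_eq_smul ?_ (smul_ne_zero hlam (srMat_ne_zero x y))
    (mul_ne_zero hlam hxy)
  rw [smul_mul_smul_comm, srMat_mul_srMat, smul_smul, smul_smul]
  ring_nf

end srMat

theorem srSet_eigenvalues_and_estimate_general (m : ℕ) (r : ℝ)
    (hr1 : r < 1) (a b x y : EuclideanSpace ℂ (Fin m))
    (ha : ‖a‖ < r) (hb : ‖b‖ < r) (hx : ‖x‖ < r) (hy : ‖y‖ < r)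
    (lam mu : ℂ) (hlam : lam ≠ 0) (hmu : mu ≠ 0) :
    {z ∈ spectrum ℂ (lam • srMat m a b) | z ≠ 0} =
        {lam * (1 + ∑ i, (starRingEnd ℂ) (a i) * b i)} ∧
      {z ∈ spectrum ℂ (mu • srMat m x y) | z ≠ 0} =
        {mu * (1 + ∑ i, (starRingEnd ℂ) (x i) * y i)} ∧
      {z ∈ spectrum ℂ (lam • srMat m a b * mu • srMat m x y) | z ≠ 0} =
        {lam * mu * (1 + ∑ i, (starRingEnd ℂ) (a i) * y i) *
          (1 + ∑ i, (starRingEnd ℂ) (x i) * b i)} ∧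
      ‖(lam * mu * (1 + ∑ i, (starRingEnd ℂ) (a i) * y i) *
              (1 + ∑ i, (starRingEnd ℂ) (x i) * b i) -
            lam * (1 + ∑ i, (starRingEnd ℂ) (a i) * b i) *
              (mu * (1 + ∑ i, (starRingEnd ℂ) (x i) * y i)))‖ ≤
        4 * r ^ 2 / (1 - r ^ 2) ^ 2 *
          (‖lam * (1 + ∑ i, (starRingEnd ℂ) (a i) * b i)‖ *
            ‖mu * (1 + ∑ i, (starRingEnd ℂ) (x i) * y i)‖) := by
  simp only [sum_starRingEnd_mul_eq_inner]
  have hne {u v : EuclideanSpace ℂ (Fin m)} (hu : ‖u‖ < r) (hv : ‖v‖ < r) : 1 + ⟪u, v⟫_ℂ ≠ 0 :=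
    one_add_inner_ne_zero hr1 hu.le hv.le
  refine ⟨spectrum_smul_srMat_sep_ne_zero hlam (hne ha hb),
    spectrum_smul_srMat_sep_ne_zero hmu (hne hx hy), ?_,
    norm_mul_one_add_inner_sub_le hr1 ha.le hb.le hx.le hy.le lam mu⟩
  rw [smul_mul_smul_comm, srMat_mul_srMat, smul_smul]
  exact spectrum_smul_srMat_sep_ne_zero (mul_ne_zero (mul_ne_zero hlam hmu) (hne ha hy)) (hne hx hb)

/-- For `A = λ[[1,a*],[b,ba*]]` and `B = μ[[1,x*],[y,yx*]]` in `𝒮_r` with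
`λ, μ ≠ 0`: the unique nonzero eigenvalue of `A` is `α = λ(1 + a*b)`, that of `B`
is `β = μ(1 + x*y)`, that of `AB` is `γ = λμ(1 + a*y)(1 + x*b)`, and
`|γ - αβ| ≤ (4r²/(1-r²)²)·|α|·|β|`. -/
theorem srSet_eigenvalues_and_estimate (m : ℕ) (hm : 0 < m) (r : ℝ) (hr0 : 0 < r)
    (hr1 : r < 1) (a b x y : EuclideanSpace ℂ (Fin m))
    (ha : ‖a‖ < r) (hb : ‖b‖ < r) (hx : ‖x‖ < r) (hy : ‖y‖ < r)
    (lam mu : ℂ) (hlam : lam ≠ 0) (hmu : mu ≠ 0) :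
    {z ∈ spectrum ℂ (lam • srMat m a b) | z ≠ 0} =
        {lam * (1 + ∑ i, (starRingEnd ℂ) (a i) * b i)} ∧
      {z ∈ spectrum ℂ (mu • srMat m x y) | z ≠ 0} =
        {mu * (1 + ∑ i, (starRingEnd ℂ) (x i) * y i)} ∧
      {z ∈ spectrum ℂ (lam • srMat m a b * mu • srMat m x y) | z ≠ 0} =
        {lam * mu * (1 + ∑ i, (starRingEnd ℂ) (a i) * y i) *
          (1 + ∑ i, (starRingEnd ℂ) (x i) * b i)} ∧
      ‖(lam * mu * (1 + ∑ i, (starRingEnd ℂ) (a i) * y i) *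
              (1 + ∑ i, (starRingEnd ℂ) (x i) * b i) -
            lam * (1 + ∑ i, (starRingEnd ℂ) (a i) * b i) *
              (mu * (1 + ∑ i, (starRingEnd ℂ) (x i) * y i)))‖ ≤
        4 * r ^ 2 / (1 - r ^ 2) ^ 2 *
          (‖lam * (1 + ∑ i, (starRingEnd ℂ) (a i) * b i)‖ *
            ‖mu * (1 + ∑ i, (starRingEnd ℂ) (x i) * y i)‖) :=
  srSet_eigenvalues_and_estimate_general m r hr1 a b x y ha hb hx hy lam mu hlam hmu
end

section
/- The semigroup 𝒮_r is not essentially finite: there is no finite semigroup 𝒮₀ ⊆ M_n(ℂ) with 𝒮_r ⊆ ℂ·𝒮₀. In particular, there exist infinitely many elements of 𝒮_r with (1,1)-entry equal to 1, no two of which are scalar multiples of each other. -/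
open Matrix

/-- `𝒮_r` is not essentially finite: there is no finite semigroup `𝒮₀` of matrices
with `𝒮_r ⊆ ℂ·𝒮₀`. In particular, there is an infinite subset of `𝒮_r` all of whose
elements have `(1,1)`-entry equal to `1` and no two of which are scalar multiples of
each other. -/
theorem srSet_not_essentially_finite (m : ℕ) (hm : 0 < m) (r : ℝ) (hr0 : 0 < r)
    (hr1 : r < 1) :
    (¬ ∃ S₀ : Set (Matrix (Unit ⊕ Fin m) (Unit ⊕ Fin m) ℂ),
        S₀.Finite ∧ (∀ A ∈ S₀, ∀ B ∈ S₀, A * B ∈ S₀) ∧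
        srSet m r ⊆ {A | ∃ c : ℂ, ∃ M ∈ S₀, A = c • M}) ∧
      ∃ T ⊆ srSet m r, T.Infinite ∧
        (∀ A ∈ T, A (Sum.inl ()) (Sum.inl ()) = 1) ∧
        ∀ A ∈ T, ∀ B ∈ T, A ≠ B → ∀ c : ℂ, A ≠ c • B := by
  set i0 : Fin m := ⟨0, hm⟩ with hi0
  set e : EuclideanSpace ℂ (Fin m) := EuclideanSpace.single i0 1 with he
  set f : ℝ → Matrix (Unit ⊕ Fin m) (Unit ⊕ Fin m) ℂ :=
    fun t => srMat m ((t : ℂ) • e) 0 with hf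
  set T : Set (Matrix (Unit ⊕ Fin m) (Unit ⊕ Fin m) ℂ) := f '' Set.Ioo 0 r with hT
  have hnorm : ∀ t : ℝ, ‖(t : ℂ) • e‖ = |t| := by
    intro t
    rw [norm_smul]
    simp [he, EuclideanSpace.norm_single]
  -- (1,1) entry of f t is 1
  have h11 : ∀ t : ℝ, f t (Sum.inl ()) (Sum.inl ()) = 1 := by
    intro t
    simp [hf, srMat, Matrix.fromBlocks_apply₁₁, Matrix.one_apply]
  -- the (1, i0+1) entry recovers t
  have hent : ∀ t : ℝ, f t (Sum.inl ()) (Sum.inr i0) = (t : ℂ) := by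
    intro t
    simp [hf, srMat, Matrix.fromBlocks_apply₁₂, he, EuclideanSpace.single_apply]
  have hinjf : Function.Injective f := by
    intro s t hst
    have := congrArg (fun A => A (Sum.inl ()) (Sum.inr i0)) hst
    simp only [hent] at this
    exact_mod_cast this
  have hTsub : T ⊆ srSet m r := by
    rintro A ⟨t, ⟨ht0, htr⟩, rfl⟩
    refine ⟨(t : ℂ) • e, 0, 1, ?_, ?_, by rw [one_smul]⟩
    · rw [hnorm, abs_of_pos ht0]; exact htr
    · simpa using hr0
  have hTinf : T.Infinite :=
    Set.Infinite.image (fun a _ b _ h => hinjf h)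
      (Set.Ioo_infinite (by linarith : (0:ℝ) < r))
  have hT11 : ∀ A ∈ T, A (Sum.inl ()) (Sum.inl ()) = 1 := by
    rintro A ⟨t, -, rfl⟩; exact h11 t
  have hns : ∀ A ∈ T, ∀ B ∈ T, A ≠ B → ∀ c : ℂ, A ≠ c • B := by
    intro A hA B hB hAB c hEq
    have h1 : A (Sum.inl ()) (Sum.inl ()) = 1 := hT11 A hA
    have h2 : B (Sum.inl ()) (Sum.inl ()) = 1 := hT11 B hB
    have hc : c = 1 := by
      have := congrArg (fun M => M (Sum.inl ()) (Sum.inl ())) hEq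
      simp only [Matrix.smul_apply, h2, smul_eq_mul, mul_one] at this
      rw [h1] at this; exact this.symm
    rw [hc, one_smul] at hEq
    exact hAB hEq
  constructor
  · rintro ⟨S₀, hfin, -, hsub⟩
    have key : ∀ A ∈ T, ∃ c : ℂ, ∃ M ∈ S₀, A = c • M := fun A hA => hsub (hTsub hA)
    choose c M hM hAeq using key
    have : Infinite ↥T := hTinf.to_subtype
    have : Finite ↥S₀ := hfin.to_subtype
    obtain ⟨⟨A, hA⟩, ⟨B, hB⟩, hne, hMeq⟩ :=
      Finite.exists_ne_map_eq_of_infinite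
        (fun A : ↥T => (⟨M A.1 A.2, hM A.1 A.2⟩ : ↥S₀))
    have hABne : A ≠ B := fun h => hne (Subtype.ext h)
    have hMeq' : M A hA = M B hB := congrArg Subtype.val hMeq
    have hd : c B hB ≠ 0 := by
      intro h0
      have := hT11 B hB
      rw [hAeq B hB, h0, zero_smul] at this
      simp at this
    have : A = (c A hA * (c B hB)⁻¹) • B :=
      calc A = c A hA • M A hA := hAeq A hA
        _ = c A hA • M B hB := by rw [hMeq']
        _ = (c A hA * (c B hB)⁻¹) • (c B hB • M B hB) := by
              rw [smul_smul, mul_assoc, inv_mul_cancel₀ hd, mul_one]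
        _ = (c A hA * (c B hB)⁻¹) • B := by rw [← hAeq B hB]
    exact hns A hA B hB hABne _ this
  · exact ⟨T, hTsub, hTinf, hT11, hns⟩
end
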